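/- In a catalytic flow system, every set of molecules generates an organization: for every C ⊆ M there exists an organization O obtained by first forming the closure GCL(C) and then taking its largest self-maintaining subset; in particular, for every C ⊆ M the largest self-maintaining subset of the closed set GCL(C) exists, is closed, and is therefore an organization. -/

import Mathlib

/-- A set `C` is closed: products of reactions whose reactants all lie in `C` lie in `C`. -/
def Closed {ι ρ : Type*} (re : ρ → Multiset ι × Multiset ι) (C : Set ι) : Prop :=
  ∀ r : ρ, (∀ a ∈ (re r).1, a ∈ C) → ∀ b ∈ (re r).2, b ∈ C

/-- Molecule `k` is produced within `C`. -/
def Produced {ι ρ : Type*} [DecidableEq ι] (re : ρ → Multiset ι × Multiset ι)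
    (C : Set ι) (k : ι) : Prop :=
  ∃ r : ρ, (∀ a ∈ (re r).1, a ∈ C) ∧ (re r).1.count k < (re r).2.count k

/-- Molecule `k` is used-up within `C`. -/
def UsedUp {ι ρ : Type*} [DecidableEq ι] (re : ρ → Multiset ι × Multiset ι)
    (C : Set ι) (k : ι) : Prop :=
  ∃ r : ρ, (∀ a ∈ (re r).1, a ∈ C) ∧ (re r).2.count k < (re r).1.count k

/-- `S` is self-maintaining. -/
def SelfMaintaining {ι ρ : Type*} [DecidableEq ι] (re : ρ → Multiset ι × Multiset ι)
    (S : Set ι) : Prop :=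
  ∀ k ∈ S, UsedUp re S k → Produced re S k

/-- A semi-organization is closed and self-maintaining. -/
def SemiOrganization {ι ρ : Type*} [DecidableEq ι] (re : ρ → Multiset ι × Multiset ι)
    (S : Set ι) : Prop :=
  Closed re S ∧ SelfMaintaining re S

/-- Entry of the stoichiometric matrix: products minus reactants multiplicity. -/
noncomputable def stoich {ι ρ : Type*} [DecidableEq ι] (re : ρ → Multiset ι × Multiset ι)
    (i : ι) (r : ρ) : ℝ :=
  ((re r).2.count i : ℝ) - ((re r).1.count i : ℝ)

/-- `C` is mass-maintaining. -/
def MassMaintaining {ι ρ : Type*} [DecidableEq ι] [Fintype ρ]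
    (re : ρ → Multiset ι × Multiset ι) (C : Set ι) : Prop :=
  ∃ v : ρ → ℝ,
    (∀ r : ρ, (∀ a ∈ (re r).1, a ∈ C) → 0 < v r) ∧
    (∀ r : ρ, ¬ (∀ a ∈ (re r).1, a ∈ C) → v r = 0) ∧
    (∀ i ∈ C, 0 ≤ ∑ r : ρ, stoich re i r * v r)

/-- An organization is closed and mass-maintaining. -/
def Organization {ι ρ : Type*} [DecidableEq ι] [Fintype ρ]
    (re : ρ → Multiset ι × Multiset ι) (O : Set ι) : Prop :=
  Closed re O ∧ MassMaintaining re O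

/-- The closure of `S`: the smallest closed set containing `S`. -/
def GCL {ι ρ : Type*} (re : ρ → Multiset ι × Multiset ι) (S : Set ι) : Set ι :=
  ⋂₀ {C : Set ι | Closed re C ∧ S ⊆ C}

/-- A catalytic flow system: every molecule has a dilution reaction `{k} → ∅`,
and no molecule is used-up by any other reaction. -/
def CatalyticFlow {ι ρ : Type*} [DecidableEq ι] (re : ρ → Multiset ι × Multiset ι) : Prop :=
  (∀ k : ι, ∃ r : ρ, re r = ({k}, (0 : Multiset ι))) ∧
  (∀ r : ρ, (¬ ∃ k : ι, re r = ({k}, (0 : Multiset ι))) →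
    ∀ k : ι, (re r).1.count k ≤ (re r).2.count k)

/-- A consistent reaction system with persistent molecules `P`. -/
def Consistent {ι ρ : Type*} [DecidableEq ι] (re : ρ → Multiset ι × Multiset ι)
    (P : Set ι) : Prop :=
  (∀ k : ι, k ∉ P → ∃ r : ρ, (re r).1 = {k} ∧ k ∉ (re r).2) ∧
  (∀ r : ρ, ∀ p ∈ P, (re r).1.count p ≤ (re r).2.count p)

/-- `S` is the largest self-maintaining subset of `C`. -/
def IsGSM {ι ρ : Type*} [DecidableEq ι] (re : ρ → Multiset ι × Multiset ι)
    (C S : Set ι) : Prop :=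
  S ⊆ C ∧ SelfMaintaining re S ∧ ∀ T : Set ι, T ⊆ C → SelfMaintaining re T → T ⊆ S

/-- `S` is the largest mass-maintaining subset of `C`. -/
def IsGMM {ι ρ : Type*} [DecidableEq ι] [Fintype ρ] (re : ρ → Multiset ι × Multiset ι)
    (C S : Set ι) : Prop :=
  S ⊆ C ∧ MassMaintaining re S ∧ ∀ T : Set ι, T ⊆ C → MassMaintaining re T → T ⊆ S

/-- An admissible flux function w.r.t. threshold `Φ`: nonnegative, and positive
exactly when all reactants are present (above threshold). -/
def Admissible {ι ρ : Type*} (re : ρ → Multiset ι × Multiset ι) (Φ : ℝ)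
    (v : (ι → ℝ) → ρ → ℝ) : Prop :=
  ∀ x : ι → ℝ, ∀ r : ρ, 0 ≤ v x r ∧ (0 < v x r ↔ ∀ a ∈ (re r).1, x a > Φ)

/-!
In a catalytic flow system every molecule of a set is used-up within it by its own dilution
reaction, so self-maintenance just says that every molecule is produced. Being produced is
monotone in the set, hence self-maintaining subsets of `GCL C` are closed under unions and
there is a largest one, `O`. A product of a reaction applicable in `O` is either a catalyst
(hence already in `O`) or produced within `O`; in the second case adding it to `O` keeps the
set self-maintaining and inside the closed set `GCL C`, so by maximality it lies in `O`: `O` is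
closed. Finally, a self-maintaining set is mass-maintaining: run every applicable non-dilution
reaction at rate `1` and every applicable dilution at rate `ε = 1 / (|R| + 1)`; each molecule
gains at least `1` from a reaction producing it and loses at most `ε` per reaction.
-/

section CatalyticFlowSystems

variable {ι ρ : Type*} {re : ρ → Multiset ι × Multiset ι}

theorem closed_GCL (re : ρ → Multiset ι × Multiset ι) (S : Set ι) : Closed re (GCL re S) :=
  fun r hr b hb => Set.mem_sInter.mpr fun D hD =>
    hD.1 r (fun a ha => Set.mem_sInter.mp (hr a ha) D hD) b hb

def IsDilution (re : ρ → Multiset ι × Multiset ι) (r : ρ) : Prop :=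
  ∃ k : ι, re r = ({k}, (0 : Multiset ι))

open Classical in
noncomputable def catalyticFlux (re : ρ → Multiset ι × Multiset ι) (S : Set ι) (ε : ℝ) (r : ρ) :
    ℝ :=
  if ∀ a ∈ (re r).1, a ∈ S then (if IsDilution re r then ε else 1) else 0

theorem catalyticFlux_pos {S : Set ι} {ε : ℝ} (hε : 0 < ε) {r : ρ}
    (hr : ∀ a ∈ (re r).1, a ∈ S) : 0 < catalyticFlux re S ε r := by
  unfold catalyticFlux
  split_ifs <;> simp [hε]

theorem catalyticFlux_eq_zero {S : Set ι} {ε : ℝ} {r : ρ} (hr : ¬ ∀ a ∈ (re r).1, a ∈ S) :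
    catalyticFlux re S ε r = 0 :=
  if_neg hr

section DecidableEq

variable [DecidableEq ι]

theorem Produced.mono {S T : Set ι} (hST : S ⊆ T) {k : ι} (hk : Produced re S k) :
    Produced re T k :=
  let ⟨r, hr, hlt⟩ := hk
  ⟨r, fun a ha => hST (hr a ha), hlt⟩

theorem not_isDilution_of_count_lt {r : ρ} {k : ι}
    (hr : (re r).1.count k < (re r).2.count k) : ¬ IsDilution re r := by
  rintro ⟨j, hj⟩
  simp [hj] at hr

theorem one_le_stoich_mul_catalyticFlux {S : Set ι} {ε : ℝ} {r : ρ} {k : ι}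
    (hr : ∀ a ∈ (re r).1, a ∈ S) (hk : (re r).1.count k < (re r).2.count k) :
    1 ≤ stoich re k r * catalyticFlux re S ε r := by
  have hflux : catalyticFlux re S ε r = 1 := by
    simp only [catalyticFlux, if_pos hr, if_neg (not_isDilution_of_count_lt hk)]
  have hcount : ((re r).1.count k : ℝ) + 1 ≤ (re r).2.count k := by exact_mod_cast hk
  rw [hflux, stoich]
  linarith

namespace CatalyticFlow

theorem usedUp_of_mem (h : CatalyticFlow re) {S : Set ι} {k : ι} (hk : k ∈ S) :
    UsedUp re S k := by
  obtain ⟨r, hr⟩ := h.1 k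
  refine ⟨r, fun a ha => ?_, by simp [hr]⟩
  rw [hr, Multiset.mem_singleton] at ha
  exact ha ▸ hk

theorem selfMaintaining_iff (h : CatalyticFlow re) {S : Set ι} :
    SelfMaintaining re S ↔ ∀ k ∈ S, Produced re S k :=
  ⟨fun hS k hk => hS k hk (h.usedUp_of_mem hk), fun hS k hk _ => hS k hk⟩

theorem mem_or_produced_of_mem_products (h : CatalyticFlow re) {S : Set ι} {r : ρ}
    (hr : ∀ a ∈ (re r).1, a ∈ S) {b : ι} (hb : b ∈ (re r).2) : b ∈ S ∨ Produced re S b := by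
  by_cases hd : IsDilution re r
  · obtain ⟨j, hj⟩ := hd
    simp [hj] at hb
  rcases (h.2 r hd b).lt_or_eq with hlt | heq
  · exact .inr ⟨r, hr, hlt⟩
  · exact .inl (hr b (Multiset.count_pos.mp (heq ▸ Multiset.count_pos.mpr hb)))

theorem selfMaintaining_sUnion (h : CatalyticFlow re) {𝒮 : Set (Set ι)}
    (h𝒮 : ∀ T ∈ 𝒮, SelfMaintaining re T) : SelfMaintaining re (⋃₀ 𝒮) := by
  rw [h.selfMaintaining_iff]
  rintro k ⟨T, hT, hkT⟩
  exact ((h.selfMaintaining_iff.mp (h𝒮 T hT)) k hkT).mono (Set.subset_sUnion_of_mem hT)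

theorem selfMaintaining_insert (h : CatalyticFlow re) {S : Set ι} (hS : SelfMaintaining re S)
    {b : ι} (hb : Produced re S b) : SelfMaintaining re (insert b S) := by
  rw [h.selfMaintaining_iff] at hS ⊢
  rintro k (rfl | hk)
  · exact hb.mono (Set.subset_insert _ _)
  · exact (hS k hk).mono (Set.subset_insert _ _)

theorem isGSM_sUnion (h : CatalyticFlow re) (G : Set ι) :
    IsGSM re G (⋃₀ {T | T ⊆ G ∧ SelfMaintaining re T}) :=
  ⟨Set.sUnion_subset fun _ hT => hT.1, h.selfMaintaining_sUnion fun _ hT => hT.2,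
    fun _ hTG hT => Set.subset_sUnion_of_mem ⟨hTG, hT⟩⟩

theorem closed_of_isGSM (h : CatalyticFlow re) {G O : Set ι} (hG : Closed re G)
    (hO : IsGSM re G O) : Closed re O := by
  intro r hr b hb
  rcases h.mem_or_produced_of_mem_products hr hb with hbO | hprod
  · exact hbO
  have hbG : b ∈ G := hG r (fun a ha => hO.1 (hr a ha)) b hb
  exact hO.2.2 _ (Set.insert_subset hbG hO.1) (h.selfMaintaining_insert hO.2.1 hprod)
    (Set.mem_insert b O)

theorem neg_le_stoich_mul_catalyticFlux (h : CatalyticFlow re) (S : Set ι) {ε : ℝ}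
    (hε : 0 ≤ ε) (k : ι) (r : ρ) : -ε ≤ stoich re k r * catalyticFlux re S ε r := by
  by_cases hr : ∀ a ∈ (re r).1, a ∈ S
  swap
  · rw [catalyticFlux_eq_zero hr, mul_zero]
    linarith
  by_cases hd : IsDilution re r
  · obtain ⟨j, hj⟩ := hd
    have hflux : catalyticFlux re S ε r = ε := by
      simp only [catalyticFlux, if_pos hr]
      exact if_pos ⟨j, hj⟩
    rw [hflux, stoich, hj]
    by_cases hkj : k = j <;> simp [hkj, hε]
  · have hflux : catalyticFlux re S ε r = 1 := by
      simp only [catalyticFlux, if_pos hr, if_neg hd]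
    have hcount : ((re r).1.count k : ℝ) ≤ (re r).2.count k := by exact_mod_cast h.2 r hd k
    rw [hflux, stoich]
    linarith

theorem massMaintaining_of_selfMaintaining [Fintype ρ] (h : CatalyticFlow re) {S : Set ι}
    (hS : SelfMaintaining re S) : MassMaintaining re S := by
  classical
  set ε : ℝ := (Fintype.card ρ + 1)⁻¹
  have hε : 0 < ε := by positivity
  refine ⟨catalyticFlux re S ε, fun r => catalyticFlux_pos hε, fun r => catalyticFlux_eq_zero,
    fun k hk => ?_⟩
  obtain ⟨r₀, hr₀, hprod⟩ := (h.selfMaintaining_iff.mp hS) k hk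
  have hterm : ∀ r, (if r = r₀ then 1 else 0) - ε ≤ stoich re k r * catalyticFlux re S ε r := by
    intro r
    have hneg := h.neg_le_stoich_mul_catalyticFlux S hε.le k r
    split_ifs with hr
    · subst hr
      linarith [one_le_stoich_mul_catalyticFlux (ε := ε) hr₀ hprod]
    · linarith
  have hsum : ∑ r : ρ, ((if r = r₀ then 1 else 0) - ε) = 1 - Fintype.card ρ * ε := by
    simp [Finset.sum_sub_distrib]
  have hcard : (Fintype.card ρ : ℝ) * ε < 1 := by
    rw [← div_eq_mul_inv, div_lt_one (by positivity)]
    linarith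
  calc (0 : ℝ) ≤ 1 - Fintype.card ρ * ε := by linarith
    _ = _ := hsum.symm
    _ ≤ _ := Finset.sum_le_sum fun r _ => hterm r

end CatalyticFlow

end DecidableEq

end CatalyticFlowSystems

theorem stmt17_general {ι ρ : Type*} [Fintype ρ] [DecidableEq ι]
    (re : ρ → Multiset ι × Multiset ι) (h : CatalyticFlow re) (C : Set ι) :
    ∃ O : Set ι,
      (O ⊆ GCL re C ∧ SelfMaintaining re O ∧
        ∀ T : Set ι, T ⊆ GCL re C → SelfMaintaining re T → T ⊆ O) ∧
      Closed re O ∧ Organization re O := by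
  have hO := h.isGSM_sUnion (GCL re C)
  have hclosed := h.closed_of_isGSM (closed_GCL re C) hO
  exact ⟨_, hO, hclosed, hclosed, h.massMaintaining_of_selfMaintaining hO.2.1⟩

/-- in a catalytic flow system, every set generates an
organization: the largest self-maintaining subset of `GCL C` exists, is closed,
and is an organization. -/
theorem stmt17 {ι ρ : Type*} [Fintype ι] [Fintype ρ] [DecidableEq ι]
    (re : ρ → Multiset ι × Multiset ι) (h : CatalyticFlow re) (C : Set ι) :
    ∃ O : Set ι,
      (O ⊆ GCL re C ∧ SelfMaintaining re O ∧
        ∀ T : Set ι, T ⊆ GCL re C → SelfMaintaining re T → T ⊆ O) ∧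
      Closed re O ∧ Organization re O :=
  stmt17_general re h C
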